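/- Let G and H be graphs, each given an acyclic edge colouring with disjoint colour sets, and colour G □ H by giving every copy of G the colouring of G and every crossing edge the colour of the corresponding edge of H. Then the resulting edge colouring of G □ H is proper, and every bichromatic cycle of this colouring must use both a colour of G and a colour of H (i.e., it alternates between local edges and crossing-edge colours). -/

import Mathlib

open SimpleGraph

/-- A proper edge colouring: edges sharing a vertex get distinct colours. -/
def IsProperEdgeColoring {V : Type*} (G : SimpleGraph V) {S : Type*} (c : Sym2 V → S) : Prop :=
  ∀ e₁ ∈ G.edgeSet, ∀ e₂ ∈ G.edgeSet, e₁ ≠ e₂ → (∃ x, x ∈ e₁ ∧ x ∈ e₂) → c e₁ ≠ c e₂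

/-- An acyclic edge colouring: proper, and every cycle uses at least three colours. -/
def IsAcyclicEdgeColoring {V : Type*} (G : SimpleGraph V) {S : Type*} (c : Sym2 V → S) : Prop :=
  IsProperEdgeColoring G c ∧
  ∀ (v : V) (w : G.Walk v v), w.IsCycle →
    ∃ e₁ ∈ w.edges, ∃ e₂ ∈ w.edges, ∃ e₃ ∈ w.edges,
      c e₁ ≠ c e₂ ∧ c e₁ ≠ c e₃ ∧ c e₂ ≠ c e₃

/-- The acyclic chromatic index: least number of colours in an acyclic edge colouring. -/
noncomputable def acyclicChromaticIndex {V : Type*} (G : SimpleGraph V) : ℕ :=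
  sInf {n | ∃ c : Sym2 V → Fin n, IsAcyclicEdgeColoring G c}

/-- A maximal bichromatic path with colour pair {a, b}: a path whose edges use exactly
the colours a and b, not extendable at either end within these colours. -/
def IsMaxBichromaticPath {V S : Type*} (G : SimpleGraph V) (c : Sym2 V → S)
    (a b : S) {u v : V} (w : G.Walk u v) : Prop :=
  w.IsPath ∧ a ≠ b ∧ (∀ e ∈ w.edges, c e = a ∨ c e = b) ∧
  a ∈ w.edges.map c ∧ b ∈ w.edges.map c ∧
  (∀ x, ∀ h : G.Adj x u, ¬((Walk.cons h w).IsPath ∧ (c s(x, u) = a ∨ c s(x, u) = b))) ∧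
  (∀ y, ∀ h : G.Adj v y, ¬((w.concat h).IsPath ∧ (c s(v, y) = a ∨ c s(v, y) = b)))

/-- The auxiliary graph: G plus an edge between the endpoints of every maximal
bichromatic path of the colouring c. -/
def auxGraph {V S : Type*} (G : SimpleGraph V) (c : Sym2 V → S) : SimpleGraph V where
  Adj u v := u ≠ v ∧ (G.Adj u v ∨
    ∃ a b, (∃ w : G.Walk u v, IsMaxBichromaticPath G c a b w) ∨
           (∃ w : G.Walk v u, IsMaxBichromaticPath G c a b w))
  symm := by
    constructor
    rintro u v ⟨hne, h | ⟨a, b, h⟩⟩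
    · exact ⟨hne.symm, Or.inl h.symm⟩
    · exact ⟨hne.symm, Or.inr ⟨a, b, h.symm⟩⟩
  loopless := ⟨fun v h => h.1 rfl⟩

/-- The number of maximal bichromatic paths having `v` as an endpoint. -/
noncomputable def maxBichromPathsAt {V S : Type*} (G : SimpleGraph V) (c : Sym2 V → S)
    (v : V) : ℕ :=
  {p : (u : V) × G.Walk v u | ∃ a b, IsMaxBichromaticPath G c a b p.2}.ncard

/-- The combined edge colouring of G □ H: local edges get the colour of the corresponding
edge of G, crossing edges the colour of the corresponding edge of H (disjoint colour sets). -/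
def boxColoring {α β S T : Type*} [DecidableEq β]
    (cG : Sym2 α → S) (cH : Sym2 β → T) : Sym2 (α × β) → S ⊕ T :=
  Sym2.lift ⟨fun p q =>
    if p.2 = q.2 then Sum.inl (cG s(p.1, q.1)) else Sum.inr (cH s(p.2, q.2)),
    by
      intro p q
      by_cases h : p.2 = q.2
      · simp [h, Sym2.eq_swap]
      · simp [h, Ne.symm h, Sym2.eq_swap]⟩

/-!
A bichromatic cycle of `G □ H` using only colours of `G` consists of local edges, so it stays in
one copy of `G` and is the image of a cycle of `G` with the same two colours, which the acyclic
colouring of `G` forbids; symmetrically, a cycle using only colours of `H` stays in one copy of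
`H`. Properness is checked at a common vertex of two edges: edges of different kinds get colours
from disjoint sets, and two edges of the same kind lie in one copy of `G` or of `H`.
-/

lemma isProperEdgeColoring_iff {V S : Type*} {G : SimpleGraph V} {c : Sym2 V → S} :
    IsProperEdgeColoring G c ↔
      ∀ p q r, G.Adj p q → G.Adj p r → q ≠ r → c s(p, q) ≠ c s(p, r) := by
  constructor
  · intro hc p q r hpq hpr hqr
    exact hc _ hpq _ hpr (mt Sym2.congr_right.mp hqr)
      ⟨p, Sym2.mem_mk_left _ _, Sym2.mem_mk_left _ _⟩
  · rintro hc e₁ he₁ e₂ he₂ hne ⟨p, hp₁, hp₂⟩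
    obtain ⟨q, rfl⟩ := Sym2.mem_iff_exists.mp hp₁
    obtain ⟨r, rfl⟩ := Sym2.mem_iff_exists.mp hp₂
    exact hc p q r he₁ he₂ (mt (congrArg _) hne)

namespace SimpleGraph.Walk

variable {V W : Type*} {G : SimpleGraph V} {G' : SimpleGraph W}

lemma IsCycle.exists_isCycle_of_support_subset_range (φ : G ↪g G') {v : W} {w : G'.Walk v v}
    (hw : w.IsCycle) (hrange : ∀ z ∈ w.support, z ∈ Set.range φ) :
    ∃ (u : V) (w' : G.Walk u u), w'.IsCycle ∧ ∀ e ∈ w'.edges, e.map φ ∈ w.edges := by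
  set wi := w.induce (Set.range φ) hrange
  have hwi : wi.IsCycle := IsCycle.of_map (f := (Embedding.induce _).toHom) (by rwa [map_induce])
  refine ⟨_, wi.map φ.isoInduceRange.symm.toHom, hwi.map φ.isoInduceRange.symm.injective, ?_⟩
  intro e he
  rw [edges_map, List.mem_map] at he
  obtain ⟨e', he', rfl⟩ := he
  have hedges : wi.edges.map (Sym2.map (↑)) = w.edges :=
    (edges_map _ _).symm.trans (congrArg edges (map_induce w hrange))
  rw [← hedges, Sym2.map_map]
  refine List.mem_map.mpr ⟨e', he', congrArg (Sym2.map · e') (funext fun z => ?_)⟩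
  exact (Equiv.apply_ofInjective_symm φ.injective z).symm

lemma forall_mem_support_eq_of_forall_mem_darts {f : V → W} {u v : V} (w : G.Walk u v)
    (hw : ∀ d ∈ w.darts, f d.fst = f d.snd) : ∀ x ∈ w.support, f x = f u := by
  induction w with
  | nil => simp
  | cons h w ih =>
    rw [darts_cons, List.forall_mem_cons] at hw
    intro x hx
    rcases List.mem_cons.mp hx with rfl | hx
    · rfl
    · rw [ih hw.2 x hx]; exact hw.1.symm

end SimpleGraph.Walk

section Coloring

variable {V S R : Type*} {G : SimpleGraph V} {c : Sym2 V → S}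

lemma IsProperEdgeColoring.comp {f : S → R} (hf : Function.Injective f)
    (hc : IsProperEdgeColoring G c) : IsProperEdgeColoring G (f ∘ c) :=
  fun e₁ he₁ e₂ he₂ hne hx => hf.ne (hc e₁ he₁ e₂ he₂ hne hx)

lemma IsAcyclicEdgeColoring.comp {f : S → R} (hf : Function.Injective f)
    (hc : IsAcyclicEdgeColoring G c) : IsAcyclicEdgeColoring G (f ∘ c) := by
  refine ⟨hc.1.comp hf, fun v w hw => ?_⟩
  obtain ⟨e₁, h₁, e₂, h₂, e₃, h₃, h₁₂, h₁₃, h₂₃⟩ := hc.2 v w hw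
  exact ⟨e₁, h₁, e₂, h₂, e₃, h₃, hf.ne h₁₂, hf.ne h₁₃, hf.ne h₂₃⟩

lemma IsAcyclicEdgeColoring.exists_mem_edges_ne (hc : IsAcyclicEdgeColoring G c) {v : V}
    {w : G.Walk v v} (hw : w.IsCycle) (x y : S) : ∃ e ∈ w.edges, c e ≠ x ∧ c e ≠ y := by
  obtain ⟨e₁, h₁, e₂, h₂, e₃, h₃, h₁₂, h₁₃, h₂₃⟩ := hc.2 v w hw
  by_contra! h
  have hxy (e) (he : e ∈ w.edges) : c e = x ∨ c e = y := or_iff_not_imp_left.mpr (h e he)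
  grind [hxy e₁ h₁, hxy e₂ h₂, hxy e₃ h₃]

end Coloring

section BoxColoring

variable {α β S T : Type*} [DecidableEq β] {G : SimpleGraph α} {H : SimpleGraph β}
  {cG : Sym2 α → S} {cH : Sym2 β → T}

@[simp]
lemma boxColoring_mk (p q : α × β) :
    boxColoring cG cH s(p, q) =
      if p.2 = q.2 then .inl (cG s(p.1, q.1)) else .inr (cH s(p.2, q.2)) := rfl

lemma boxColoring_map_boxProdLeft (b : β) (e : Sym2 α) :
    boxColoring cG cH (e.map (G.boxProdLeft H b)) = .inl (cG e) := by
  induction e using Sym2.ind with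
  | _ x y => simp

lemma boxColoring_map_boxProdRight (a : α) {e : Sym2 β} (he : ¬e.IsDiag) :
    boxColoring cG cH (e.map (G.boxProdRight H a)) = .inr (cH e) := by
  induction e using Sym2.ind with
  | _ x y => simpa using he

lemma isProperEdgeColoring_boxColoring (hG : IsProperEdgeColoring G cG)
    (hH : IsProperEdgeColoring H cH) : IsProperEdgeColoring (G □ H) (boxColoring cG cH) := by
  rw [isProperEdgeColoring_iff] at hG hH ⊢
  rintro p q r (⟨hpq, hq⟩ | ⟨hpq, hq⟩) (⟨hpr, hr⟩ | ⟨hpr, hr⟩) hqr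
  all_goals rw [boxColoring_mk, boxColoring_mk]
  · have hqr₁ : q.1 ≠ r.1 := fun h => hqr (Prod.ext h (hq.symm.trans hr))
    rw [if_pos hq, if_pos hr]
    exact fun h => hG _ _ _ hpq hpr hqr₁ (Sum.inl.inj h)
  · rw [if_pos hq, if_neg hpr.ne]
    exact Sum.inl_ne_inr
  · rw [if_neg hpq.ne, if_pos hr]
    exact Sum.inr_ne_inl
  · have hqr₂ : q.2 ≠ r.2 := fun h => hqr (Prod.ext (hq.symm.trans hr) h)
    rw [if_neg hpq.ne, if_neg hpr.ne]
    exact fun h => hH _ _ _ hpq hpr hqr₂ (Sum.inr.inj h)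

lemma SimpleGraph.Adj.fst_eq_of_boxColoring_ne_inl {p q : α × β} (hpq : (G □ H).Adj p q)
    (h : ∀ s, boxColoring cG cH s(p, q) ≠ .inl s) : p.1 = q.1 := by
  rcases hpq with ⟨-, hpq⟩ | ⟨-, hpq⟩
  · simp [hpq] at h
  · exact hpq

lemma snd_eq_of_boxColoring_ne_inr {p q : α × β}
    (h : ∀ t, boxColoring cG cH s(p, q) ≠ .inr t) : p.2 = q.2 := by
  by_contra hpq
  exact h _ (if_neg hpq)

lemma exists_boxColoring_eq_inl_of_isCycle (hH : IsAcyclicEdgeColoring H cH) {v : α × β}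
    {w : (G □ H).Walk v v} (hw : w.IsCycle) {x y : S ⊕ T}
    (hxy : ∀ e ∈ w.edges, boxColoring cG cH e = x ∨ boxColoring cG cH e = y) :
    ∃ e ∈ w.edges, ∃ s, boxColoring cG cH e = .inl s := by
  by_contra! hinr
  have hcopy : ∀ z ∈ w.support, z ∈ Set.range (G.boxProdRight H v.1) := by
    refine fun z hz => ⟨z.2, Prod.ext ?_ rfl⟩
    refine (w.forall_mem_support_eq_of_forall_mem_darts (f := Prod.fst) (fun d hd => ?_) z hz).symm
    exact d.adj.fst_eq_of_boxColoring_ne_inl (hinr _ (List.mem_map_of_mem hd))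
  obtain ⟨b, w', hw', hedges⟩ := hw.exists_isCycle_of_support_subset_range _ hcopy
  obtain ⟨e, he, hx, hy⟩ := (hH.comp Sum.inr_injective).exists_mem_edges_ne hw' x y
  have := hxy _ (hedges e he)
  have hdiag := H.not_isDiag_of_mem_edgeSet (w'.edges_subset_edgeSet he)
  rw [boxColoring_map_boxProdRight v.1 hdiag] at this
  exact this.elim hx hy

lemma exists_boxColoring_eq_inr_of_isCycle (hG : IsAcyclicEdgeColoring G cG) {v : α × β}
    {w : (G □ H).Walk v v} (hw : w.IsCycle) {x y : S ⊕ T}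
    (hxy : ∀ e ∈ w.edges, boxColoring cG cH e = x ∨ boxColoring cG cH e = y) :
    ∃ e ∈ w.edges, ∃ t, boxColoring cG cH e = .inr t := by
  by_contra! hinl
  have hcopy : ∀ z ∈ w.support, z ∈ Set.range (G.boxProdLeft H v.2) := by
    refine fun z hz => ⟨z.1, Prod.ext rfl ?_⟩
    refine (w.forall_mem_support_eq_of_forall_mem_darts (f := Prod.snd) (fun d hd => ?_) z hz).symm
    exact snd_eq_of_boxColoring_ne_inr (hinl _ (List.mem_map_of_mem hd))
  obtain ⟨a, w', hw', hedges⟩ := hw.exists_isCycle_of_support_subset_range _ hcopy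
  obtain ⟨e, he, hx, hy⟩ := (hG.comp Sum.inl_injective).exists_mem_edges_ne hw' x y
  have := hxy _ (hedges e he)
  rw [boxColoring_map_boxProdLeft v.2] at this
  exact this.elim hx hy

end BoxColoring

/-- the combined colouring of G □ H is proper, and every bichromatic cycle
uses both a colour of G and a colour of H. -/
theorem boxColoring_proper_and_bichromatic_cycles_mixed {α β S T : Type*} [DecidableEq β]
    (G : SimpleGraph α) (H : SimpleGraph β)
    (cG : Sym2 α → S) (cH : Sym2 β → T)
    (hG : IsAcyclicEdgeColoring G cG) (hH : IsAcyclicEdgeColoring H cH) :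
    IsProperEdgeColoring (G □ H) (boxColoring cG cH) ∧
    ∀ (v : α × β) (w : (G □ H).Walk v v), w.IsCycle →
      (∃ x y : S ⊕ T, ∀ e ∈ w.edges, boxColoring cG cH e = x ∨ boxColoring cG cH e = y) →
      (∃ e ∈ w.edges, ∃ s : S, boxColoring cG cH e = Sum.inl s) ∧
      (∃ e ∈ w.edges, ∃ t : T, boxColoring cG cH e = Sum.inr t) :=
  ⟨isProperEdgeColoring_boxColoring hG.1 hH.1, fun _ _ hw ⟨_, _, hxy⟩ =>
    ⟨exists_boxColoring_eq_inl_of_isCycle hH hw hxy,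
      exists_boxColoring_eq_inr_of_isCycle hG hw hxy⟩⟩
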